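/- For the Michaelis–Menten–Henri system with parameters κ > λ > 0, the ε²-coefficient of the first CSP manifold, ψ̃_{(1,2)}(s) = −κ²λs(s+κ−λ)/(s+κ)⁷, differs from the ε²-coefficient of the slow manifold, h2(s) = κλs(2κλ − 3λs − κs − κ²)/(s+κ)⁷, by ψ̃_{(1,2)}(s) − h2(s) = κλ²s(3s−κ)/(s+κ)⁷; in particular, this difference is nonzero for every s > 0 with s ≠ κ/3, so the first CSP manifold agrees with the slow manifold exactly through order ε but not, in general, at order ε². -/
import Mathlib


/-- The `ε²`-coefficient of the first CSP manifold for the MMH system. -/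
noncomputable def mmhPsi12 (κ lam : ℝ) (s : ℝ) : ℝ :=
  -(κ ^ 2 * lam * s * (s + κ - lam)) / (s + κ) ^ 7

/-- The `ε²`-coefficient of the slow manifold for the MMH system. -/
noncomputable def mmhH2coef (κ lam : ℝ) (s : ℝ) : ℝ :=
  κ * lam * s * (2 * κ * lam - 3 * lam * s - κ * s - κ ^ 2) / (s + κ) ^ 7

/-- for the MMH system with `κ > λ > 0`, the `ε²`-coefficient of the first
CSP manifold differs from that of the slow manifold by
`ψ̃₍₁,₂₎(s) − h₂(s) = κλ²s(3s−κ)/(s+κ)⁷`, which is nonzero for every `s > 0` with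
`s ≠ κ/3`; so the first CSP manifold agrees with the slow manifold exactly through order
`ε` but not, in general, at order `ε²`. -/
theorem mmh_first_csp_error_at_second_order (κ lam : ℝ) (hlam : 0 < lam) (hκ : lam < κ) :
    ∀ s : ℝ, 0 ≤ s →
      mmhPsi12 κ lam s - mmhH2coef κ lam s = κ * lam ^ 2 * s * (3 * s - κ) / (s + κ) ^ 7 ∧
      (0 < s → s ≠ κ / 3 → mmhPsi12 κ lam s - mmhH2coef κ lam s ≠ 0) := by
  intro s hs
  have hκ0 : 0 < κ := hlam.trans hκ
  have hsκ : 0 < s + κ := by linarith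
  have hne : (s + κ) ^ 7 ≠ 0 := by positivity
  have key : mmhPsi12 κ lam s - mmhH2coef κ lam s
      = κ * lam ^ 2 * s * (3 * s - κ) / (s + κ) ^ 7 := by
    unfold mmhPsi12 mmhH2coef
    field_simp
    ring
  refine ⟨key, ?_⟩
  intro hs0 hs3
  rw [key]
  have h3 : 3 * s - κ ≠ 0 := by
    intro h
    apply hs3
    linarith
  have hnum : κ * lam ^ 2 * s * (3 * s - κ) ≠ 0 := by
    have : κ * lam ^ 2 * s ≠ 0 := by positivity
    exact mul_ne_zero this h3
  exact div_ne_zero hnum hne
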